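/- Let f be a homeomorphism of the circle S¹. Then there exists a fully supported Borel probability measure on S¹ that is inner-distal with respect to f if and only if f is distal. -/

import Mathlib

/-!
If `y ≠ x` is proximal to `x`, the two points cut the circle into two open arcs. A homeomorphism
carries them onto the two arcs cut out by the images of `x` and `y`, and when these images are
`ε`-close, one of those arcs lies in the `ε`-ball around the image of `x`. Letting `ε → 0` along
iterates, one fixed arc from `x` to `y` is squeezed arbitrarily close to the orbit of `x`, so it
lies in the proximal cell of `x`. So that cell has nonempty interior, which a fully supported
measure charges. Conversely, if `f` is distal, proximal cells are singletons with empty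
interior, and Haar measure does the job.
-/

open Metric Set MeasureTheory Filter Topology

/-- The proximal cell of `x` with respect to the iterates `f ^ n`, `n : ℤ`. -/
noncomputable def proximalCell {X : Type*} [MetricSpace X] (f : Equiv.Perm X) (x : X) : Set X :=
  {y | (⨅ n : ℤ, dist ((f ^ n) x) ((f ^ n) y)) = 0}

section Proximal

variable {X : Type*} [MetricSpace X] (f : Equiv.Perm X)

theorem mem_proximalCell_iff {x y : X} :
    y ∈ proximalCell f x ↔ ∀ ε > 0, ∃ n : ℤ, dist ((f ^ n) x) ((f ^ n) y) < ε := by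
  have hbdd : BddBelow (range fun n : ℤ => dist ((f ^ n) x) ((f ^ n) y)) :=
    ⟨0, forall_mem_range.2 fun _ => dist_nonneg⟩
  refine ⟨fun hy ε hε => exists_lt_of_ciInf_lt (hy.symm ▸ hε), fun h => ?_⟩
  refine le_antisymm (le_of_forall_pos_lt_add fun ε hε => ?_) (le_ciInf fun _ => dist_nonneg)
  obtain ⟨n, hn⟩ := h ε hε
  exact (ciInf_le hbdd n).trans_lt (by rwa [zero_add])

theorem self_mem_proximalCell (x : X) : x ∈ proximalCell f x :=
  (mem_proximalCell_iff f).2 fun ε hε => ⟨0, by rwa [dist_self]⟩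

theorem subset_proximalCell {x : X} {U : Set X}
    (h : ∀ ε > 0, ∃ n : ℤ, (f ^ n) '' U ⊆ ball ((f ^ n) x) ε) : U ⊆ proximalCell f x := by
  intro z hz
  refine (mem_proximalCell_iff f).2 fun ε hε => ?_
  obtain ⟨n, hn⟩ := h ε hε
  exact ⟨n, by rw [dist_comm]; exact hn (mem_image_of_mem _ hz)⟩

end Proximal

theorem forall_or_forall_of_monotone {α : Type*} [LinearOrder α] {a : α} {P Q : α → Prop}
    (hP : Monotone P) (hQ : Monotone Q) (h : ∀ ε > a, P ε ∨ Q ε) :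
    (∀ ε > a, P ε) ∨ (∀ ε > a, Q ε) := by
  by_contra! ⟨⟨ε₁, hε₁, hP₁⟩, ⟨ε₂, hε₂, hQ₂⟩⟩
  rcases h (min ε₁ ε₂) (lt_min hε₁ hε₂) with hmin | hmin
  · exact hP₁ (hP (min_le_left _ _) hmin)
  · exact hQ₂ (hQ (min_le_right _ _) hmin)

theorem subset_or_subset_of_union_eq_union {X : Type*} [TopologicalSpace X] {A B C D S : Set X}
    (hA : IsPreconnected A) (hB : IsPreconnected B) (hC : IsOpen C) (hD : IsOpen D)
    (hCD : Disjoint C D) (hCne : C.Nonempty) (hAB : A ∪ B = C ∪ D) (hCS : C ⊆ S) :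
    A ⊆ S ∨ B ⊆ S := by
  rcases hA.subset_or_subset hC hD hCD (hAB ▸ subset_union_left) with hAC | hAD
  · exact Or.inl (hAC.trans hCS)
  rcases hB.subset_or_subset hC hD hCD (hAB ▸ subset_union_right) with hBC | hBD
  · exact Or.inr (hBC.trans hCS)
  have hCsubD : C ⊆ D := (hAB ▸ subset_union_left : C ⊆ A ∪ B).trans (union_subset hAD hBD)
  exact absurd (disjoint_self.1 (hCD.mono_right hCsubD)) hCne.ne_empty

theorem Homeomorph.toEquiv_zpow {X : Type*} [TopologicalSpace X] (f : X ≃ₜ X) (n : ℤ) :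
    (f ^ n).toEquiv = f.toEquiv ^ n :=
  map_zpow (⟨⟨Homeomorph.toEquiv, rfl⟩, fun _ _ => rfl⟩ : (X ≃ₜ X) →* Equiv.Perm X) f n

namespace AddCircle

variable {p : ℝ}

-- For `a < b ≤ a + p`, the open arc from `↑a` to `↑b` in the positive direction.
variable (p) in
def openArc (a b : ℝ) : Set (AddCircle p) := (↑) '' Ioo a b

theorem isOpen_openArc (a b : ℝ) : IsOpen (openArc p a b) :=
  QuotientAddGroup.isOpenMap_coe _ isOpen_Ioo

theorem isPreconnected_openArc (a b : ℝ) : IsPreconnected (openArc p a b) :=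
  isPreconnected_Ioo.image _ continuous_quotient_mk'.continuousOn

theorem openArc_nonempty {a b : ℝ} (hab : a < b) : (openArc p a b).Nonempty :=
  (nonempty_Ioo.2 hab).image _

theorem dist_coe_le (u v : ℝ) : dist (u : AddCircle p) v ≤ |u - v| := by
  rw [dist_eq_norm, ← coe_sub]
  exact QuotientAddGroup.norm_mk_le_norm

variable {s t : ℝ}

theorem openArc_subset_ball_or (hst : s < t) (hts : t < s + p) :
    openArc p s t ⊆ ball (s : AddCircle p) (dist (s : AddCircle p) t) ∨
      openArc p t (s + p) ⊆ ball (s : AddCircle p) (dist (s : AddCircle p) t) := by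
  have hp : 0 < p := by linarith
  rcases le_or_gt (t - s) (p / 2) with hshort | hlong
  · have hdist : dist (s : AddCircle p) t = t - s := by
      have habs : |t - s| = t - s := abs_of_pos (by linarith)
      rw [dist_comm, dist_eq_norm, ← coe_sub, (norm_coe_eq_abs_iff p hp.ne').2
        (by rw [habs, abs_of_pos hp]; exact hshort), habs]
    left
    rintro _ ⟨w, hw, rfl⟩
    rw [mem_ball, hdist]
    calc dist (w : AddCircle p) s ≤ |w - s| := dist_coe_le w s
      _ < t - s := by rw [abs_of_pos (by linarith [hw.1])]; linarith [hw.2]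
  · have hdist : dist (s : AddCircle p) t = s + p - t := by
      have habs : |s - t + p| = s + p - t := by rw [abs_of_pos (by linarith)]; ring
      rw [dist_eq_norm, ← coe_sub, ← coe_add_period, (norm_coe_eq_abs_iff p hp.ne').2
        (by rw [habs, abs_of_pos hp]; linarith), habs]
    right
    rintro _ ⟨w, hw, rfl⟩
    rw [mem_ball, hdist, ← coe_add_period p s]
    calc dist (w : AddCircle p) ↑(s + p) ≤ |w - (s + p)| := dist_coe_le w (s + p)
      _ < s + p - t := by rw [abs_of_neg (by linarith [hw.2])]; linarith [hw.1]

variable [hp : Fact (0 < p)]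

theorem injOn_coe_Ico (a : ℝ) : InjOn ((↑) : ℝ → AddCircle p) (Ico a (a + p)) :=
  fun _ hu _ hv h => (coe_eq_coe_iff_of_mem_Ico hu hv).1 h

theorem disjoint_openArc (hst : s < t) (hts : t < s + p) :
    Disjoint (openArc p s t) (openArc p t (s + p)) :=
  Disjoint.image (Ico_disjoint_Ico_same.mono Ioo_subset_Ico_self Ioo_subset_Ico_self)
    (injOn_coe_Ico s)
    (Ioo_subset_Ico_self.trans (Ico_subset_Ico_right hts.le))
    (Ioo_subset_Ico_self.trans (Ico_subset_Ico_left hst.le))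

theorem openArc_union_openArc (hst : s < t) (hts : t < s + p) :
    openArc p s t ∪ openArc p t (s + p) = {(s : AddCircle p), (t : AddCircle p)}ᶜ := by
  have hsplit : Ico s (s + p) \ {s, t} = Ioo s t ∪ Ioo t (s + p) := by
    ext w
    simp only [Set.mem_sdiff, mem_Ico, mem_insert_iff, mem_singleton_iff, mem_union, mem_Ioo]
    grind
  rw [openArc, openArc, ← image_union, ← hsplit, (injOn_coe_Ico s).image_sdiff_subset
    (insert_subset ⟨le_rfl, by linarith⟩ (singleton_subset_iff.2 ⟨hst.le, hts⟩)),
    coe_image_Ico_eq, image_pair, compl_eq_univ_sdiff]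

instance : Nontrivial (AddCircle p) :=
  ⟨⟨(p / 2 : ℝ), 0, fun h => by
    have := norm_half_period_eq p
    rw [h, norm_zero, abs_of_pos hp.out] at this
    linarith [hp.out]⟩⟩

theorem exists_lift_pair {x y : AddCircle p} (hxy : x ≠ y) :
    ∃ s t : ℝ, s < t ∧ t < s + p ∧ (s : AddCircle p) = x ∧ (t : AddCircle p) = y := by
  obtain ⟨s, rfl⟩ := QuotientAddGroup.mk_surjective x
  obtain ⟨⟨t, hts, hts'⟩, ht⟩ : ∃ t : Ico s (s + p), (t : AddCircle p) = y :=
    ⟨equivIco p s y, coe_equivIco⟩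
  refine ⟨s, t, hts.lt_of_ne ?_, hts', rfl, ht⟩
  rintro rfl
  exact hxy ht

/-- `h` maps the two arcs cut out by `↑s, ↑t` onto the two arcs cut out by `h ↑s, h ↑t`
(each image is preconnected, so it lies in one of them), and one of the latter is short. -/
theorem image_openArc_subset_ball_or (h : AddCircle p ≃ₜ AddCircle p) (hst : s < t)
    (hts : t < s + p) :
    h '' openArc p s t ⊆ ball (h s) (dist (h s) (h t)) ∨
      h '' openArc p t (s + p) ⊆ ball (h s) (dist (h s) (h t)) := by
  have hne : h s ≠ h t := h.injective.ne <|
    (injOn_coe_Ico s).ne (left_mem_Ico.2 (by linarith)) ⟨hst.le, hts⟩ hst.ne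
  obtain ⟨σ, τ, hστ, hτσ, hσ, hτ⟩ := exists_lift_pair hne
  have himage : h '' openArc p s t ∪ h '' openArc p t (s + p) =
      openArc p σ τ ∪ openArc p τ (σ + p) := by
    rw [← image_union, openArc_union_openArc hst hts, openArc_union_openArc hστ hτσ,
      image_compl_eq h.bijective, image_pair, hσ, hτ]
  have hA := (isPreconnected_openArc s t).image h h.continuous.continuousOn
  have hB := (isPreconnected_openArc t (s + p)).image h h.continuous.continuousOn
  rw [← hσ, ← hτ]
  rcases openArc_subset_ball_or hστ hτσ with hshort | hshort
  · exact subset_or_subset_of_union_eq_union hA hB (isOpen_openArc _ _) (isOpen_openArc _ _)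
      (disjoint_openArc hστ hτσ) (openArc_nonempty hστ) himage hshort
  · exact subset_or_subset_of_union_eq_union hA hB (isOpen_openArc _ _) (isOpen_openArc _ _)
      (disjoint_openArc hστ hτσ).symm (openArc_nonempty hτσ) (himage.trans (union_comm _ _))
      hshort

theorem interior_proximalCell_nonempty (f : AddCircle p ≃ₜ AddCircle p) {x y : AddCircle p}
    (hy : y ∈ proximalCell f.toEquiv x) (hxy : x ≠ y) :
    (interior (proximalCell f.toEquiv x)).Nonempty := by
  obtain ⟨s, t, hst, hts, rfl, rfl⟩ := exists_lift_pair hxy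
  have hzpow (n : ℤ) : ⇑(f.toEquiv ^ n) = ⇑(f ^ n) := by rw [← Homeomorph.toEquiv_zpow]; rfl
  let Shrinks (U : Set (AddCircle p)) (ε : ℝ) : Prop :=
    ∃ n : ℤ, (f.toEquiv ^ n) '' U ⊆ ball ((f.toEquiv ^ n) s) ε
  have hmono (U : Set (AddCircle p)) : Monotone (Shrinks U) :=
    fun ε δ hεδ ⟨n, hn⟩ => ⟨n, hn.trans (ball_subset_ball hεδ)⟩
  have hsplit : ∀ ε > 0, Shrinks (openArc p s t) ε ∨ Shrinks (openArc p t (s + p)) ε := by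
    intro ε hε
    obtain ⟨n, hn⟩ := (mem_proximalCell_iff _).1 hy ε hε
    rw [hzpow] at hn
    rcases image_openArc_subset_ball_or (f ^ n) hst hts with hshort | hshort
    · exact Or.inl ⟨n, by rw [hzpow]; exact hshort.trans (ball_subset_ball hn.le)⟩
    · exact Or.inr ⟨n, by rw [hzpow]; exact hshort.trans (ball_subset_ball hn.le)⟩
  rcases forall_or_forall_of_monotone (hmono _) (hmono _) hsplit with hU | hU
  · exact (openArc_nonempty hst).mono
      (interior_maximal (subset_proximalCell _ hU) (isOpen_openArc _ _))
  · exact (openArc_nonempty hts).mono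
      (interior_maximal (subset_proximalCell _ hU) (isOpen_openArc _ _))

end AddCircle

/-- A circle homeomorphism has a fully supported inner-distal Borel probability measure
iff it is distal. -/
theorem stmt6 (f : AddCircle (1:ℝ) ≃ₜ AddCircle (1:ℝ)) :
    (∃ μ : Measure (AddCircle (1:ℝ)), IsProbabilityMeasure μ ∧
        (∀ U : Set (AddCircle (1:ℝ)), IsOpen U → U.Nonempty → 0 < μ U) ∧
        ∀ x : AddCircle (1:ℝ), μ (interior (proximalCell f.toEquiv x)) = 0) ↔
      (∀ x : AddCircle (1:ℝ), proximalCell f.toEquiv x = {x}) := by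
  constructor
  · rintro ⟨μ, -, hfull, hinner⟩ x
    refine eq_singleton_iff_unique_mem.2 ⟨self_mem_proximalCell _ x, fun y hy => ?_⟩
    by_contra hyx
    exact (hfull _ isOpen_interior
      (AddCircle.interior_proximalCell_nonempty f hy (Ne.symm hyx))).ne' (hinner x)
  · intro hdistal
    refine ⟨volume, ⟨by simp [AddCircle.measure_univ]⟩, fun U hU hne => hU.measure_pos volume hne,
      fun x => ?_⟩
    rw [hdistal x, interior_singleton, measure_empty]
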